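/- Property (vi) holds for the discrete p-laplacian in dimension d = 2: Let 1 < p < ∞, Γ ≥ 1, and let a, b ∈ ℝ satisfy Γ^{-1} ≤ a ≤ Γ and Γ^{-1} ≤ b ≤ Γ. If F_p(Γ, Γ^{-1}, a, b) = 1, i.e. sign(1−Γ)·|1−Γ|^{p−1} + sign(1−Γ^{-1})·|1−Γ^{-1}|^{p−1} + sign(1−a)·|1−a|^{p−1} + sign(1−b)·|1−b|^{p−1} = 0, then (a+b)/2 ≤ 1. -/
import Mathlib


/-- `signPow p s = sign(s) · |s|^(p-1)`, i.e. `s·|s|^(p-2)` for `s ≠ 0` and `0` for `s = 0`. -/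
noncomputable def signPow (p s : ℝ) : ℝ := Real.sign s * |s| ^ (p - 1)

lemma signPow_neg (p s : ℝ) : signPow p (-s) = - signPow p s := by
  unfold signPow
  rw [Real.sign_neg, abs_neg]
  ring

lemma signPow_strictMono (p : ℝ) (hp : 1 < p) : StrictMono (signPow p) := by
  have hp1 : 0 < p - 1 := by linarith
  intro x y hxy
  unfold signPow
  rcases lt_trichotomy x 0 with hx | hx | hx
  · rcases lt_trichotomy y 0 with hy | hy | hy
    · rw [Real.sign_of_neg hx, Real.sign_of_neg hy, abs_of_neg hx, abs_of_neg hy]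
      have := Real.rpow_lt_rpow (by linarith : (0:ℝ) ≤ -y) (by linarith : -y < -x) hp1
      linarith
    · subst hy
      rw [Real.sign_of_neg hx, abs_of_neg hx]
      simp only [Real.sign_zero, zero_mul]
      have := Real.rpow_pos_of_pos (by linarith : (0:ℝ) < -x) (p - 1)
      linarith
    · rw [Real.sign_of_neg hx, Real.sign_of_pos hy, abs_of_neg hx, abs_of_pos hy]
      have h1 := Real.rpow_pos_of_pos (by linarith : (0:ℝ) < -x) (p - 1)
      have h2 := Real.rpow_pos_of_pos hy (p - 1)
      linarith
  · subst hx
    have hy : 0 < y := hxy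
    rw [Real.sign_of_pos hy, abs_of_pos hy]
    simp only [Real.sign_zero, zero_mul]
    have := Real.rpow_pos_of_pos hy (p - 1)
    linarith
  · have hy : 0 < y := lt_trans hx hxy
    rw [Real.sign_of_pos hx, Real.sign_of_pos hy, abs_of_pos hx, abs_of_pos hy]
    have := Real.rpow_lt_rpow (le_of_lt hx) hxy hp1
    linarith

/-- Property (vi) for the discrete `p`-laplacian in dimension `d = 2`. -/
theorem property_vi_plaplacian_d2 (p : ℝ) (hp : 1 < p) (Γ a b : ℝ) (hΓ : 1 ≤ Γ)
    (ha1 : Γ⁻¹ ≤ a) (ha2 : a ≤ Γ) (hb1 : Γ⁻¹ ≤ b) (hb2 : b ≤ Γ)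
    (heq : signPow p (1 - Γ) + signPow p (1 - Γ⁻¹) +
      signPow p (1 - a) + signPow p (1 - b) = 0) :
    (a + b) / 2 ≤ 1 := by
  have hsm := signPow_strictMono p hp
  have hΓ0 : 0 < Γ := by linarith
  have hinv : Γ * Γ⁻¹ = 1 := mul_inv_cancel₀ (ne_of_gt hΓ0)
  -- 1 - Γ⁻¹ ≤ Γ - 1
  have hle : 1 - Γ⁻¹ ≤ Γ - 1 := by nlinarith [sq_nonneg (Γ - 1)]
  have h1 : signPow p (1 - Γ⁻¹) ≤ signPow p (Γ - 1) := hsm.monotone hle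
  have h2 : signPow p (1 - Γ) = - signPow p (Γ - 1) := by
    rw [show (1 - Γ) = -(Γ - 1) by ring, signPow_neg]
  -- hence signPow p (1 - a) + signPow p (1 - b) ≥ 0
  have h3 : 0 ≤ signPow p (1 - a) + signPow p (1 - b) := by linarith
  have h4 : signPow p (b - 1) ≤ signPow p (1 - a) := by
    have : signPow p (b - 1) = - signPow p (1 - b) := by
      rw [show (b - 1) = -(1 - b) by ring, signPow_neg]
    linarith
  have h5 : b - 1 ≤ 1 - a := hsm.le_iff_le.mp h4
  linarith
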